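/- arXiv:2208.12313 — 2 statements merged into one kernel-verified Lean document; each statement's English description precedes it below -/
import Mathlib

section
/- (Lemma 1, monotonicity) Consider the ADMM iteration for the sparse array beamforming problem, generating sequences (w_k, v_k, u_k) for k = 0, 1, 2, …. If the augmented Lagrangian parameter satisfies ρ ≥ 2√2 · λ_max(R_x), then the objective function value sequence is monotonically non-increasing: L(w_{k+1}, v_{k+1}, u_{k+1}) ≤ L(w_k, v_k, u_k) for all k ≥ 1. -/
/-! Each ADMM sweep changes `L` in three steps. The `w`-step does not increase it, since `w_k` is
feasible for the `w`-subproblem. The `v`-step minimises the `ρ`-strongly convex quadratic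
`vᴴR_x v + (ρ/2)‖w + u − v‖²`, so it lowers `L` by at least `(ρ/2)‖v_k − v_{k+1}‖²`. The `u`-step
raises `L` by exactly `ρ‖w_{k+1} − v_{k+1}‖²`. Stationarity of the `v`-step gives
`ρ u_{k+1} = 2R_x v_{k+1}` for every `k`, so for `k ≥ 1` the residual is
`ρ(w_{k+1} − v_{k+1}) = 2R_x(v_{k+1} − v_k)`, of norm at most `2λ_max‖v_{k+1} − v_k‖`; once
`ρ² ≥ 8λ_max²` the increase is dominated by the decrease. -/

open scoped ComplexOrder

/-- Action of an `M×M` complex matrix on `ℂ^M` (Euclidean space). -/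
noncomputable def mulVecE {M : ℕ} (A : Matrix (Fin M) (Fin M) ℂ)
    (x : EuclideanSpace ℂ (Fin M)) : EuclideanSpace ℂ (Fin M) :=
  WithLp.toLp 2 (fun i => ∑ j, A i j * x j)

/-- Augmented Lagrangian `L(w,v,u) = λ‖w‖₁ + vᴴR_x v + (ρ/2)(‖w−v+u‖₂² − ‖u‖₂²)`. -/
noncomputable def lagr {M : ℕ} (Rx : Matrix (Fin M) (Fin M) ℂ) (lam ρ : ℝ)
    (w v u : EuclideanSpace ℂ (Fin M)) : ℝ :=
  lam * ∑ i, ‖w i‖ + (inner ℂ v (mulVecE Rx v) : ℂ).re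
    + ρ / 2 * (‖w - v + u‖ ^ 2 - ‖u‖ ^ 2)

open scoped InnerProductSpace

section InnerProductSpace

variable {𝕜 E : Type*} [RCLike 𝕜] [NormedAddCommGroup E] [InnerProductSpace 𝕜 E]
  {T : E →ₗ[𝕜] E} {ρ : ℝ} {g v' : E}

open RCLike

theorem LinearMap.IsSymmetric.re_inner_add_half_mul_norm_sub_sq_eq
    (hT : T.IsSymmetric) (hv' : (ρ : 𝕜) • (g - v') = (2 : 𝕜) • T v') (v : E) :
    re ⟪v, T v⟫_𝕜 + ρ / 2 * ‖g - v‖ ^ 2 =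
      re ⟪v', T v'⟫_𝕜 + ρ / 2 * ‖g - v'‖ ^ 2 +
        (re ⟪v - v', T (v - v')⟫_𝕜 + ρ / 2 * ‖v - v'‖ ^ 2) := by
  obtain ⟨d, rfl⟩ : ∃ d, v = v' + d := ⟨v - v', by abel⟩
  rw [add_sub_cancel_left]
  have hquad : re ⟪v' + d, T (v' + d)⟫_𝕜 =
      re ⟪v', T v'⟫_𝕜 + 2 * re ⟪d, T v'⟫_𝕜 + re ⟪d, T d⟫_𝕜 := by
    have : re ⟪v', T d⟫_𝕜 = re ⟪d, T v'⟫_𝕜 := by rw [← hT, inner_re_symm]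
    simp only [map_add, inner_add_left, inner_add_right]
    linarith
  have hnorm : ‖g - (v' + d)‖ ^ 2 = ‖g - v'‖ ^ 2 - 2 * re ⟪d, g - v'⟫_𝕜 + ‖d‖ ^ 2 := by
    rw [← sub_sub, @norm_sub_sq 𝕜, inner_re_symm]
  have hstat : ρ * re ⟪d, g - v'⟫_𝕜 = 2 * re ⟪d, T v'⟫_𝕜 := by
    have := congrArg (fun y => re ⟪d, y⟫_𝕜) hv'
    simpa [inner_smul_right, re_ofReal_mul] using this
  rw [hquad, hnorm]
  linear_combination -hstat

theorem LinearMap.IsPositive.re_inner_add_half_mul_norm_sub_sq_le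
    (hT : T.IsPositive) (hv' : (ρ : 𝕜) • (g - v') = (2 : 𝕜) • T v') (v : E) :
    re ⟪v', T v'⟫_𝕜 + ρ / 2 * ‖g - v'‖ ^ 2 + ρ / 2 * ‖v - v'‖ ^ 2 ≤
      re ⟪v, T v⟫_𝕜 + ρ / 2 * ‖g - v‖ ^ 2 := by
  rw [hT.isSymmetric.re_inner_add_half_mul_norm_sub_sq_eq hv' v]
  linarith [hT.re_inner_nonneg_right (v - v')]

theorem OrthonormalBasis.norm_apply_le_of_apply_eq_smul {ι : Type*} [Fintype ι]
    (b : OrthonormalBasis ι 𝕜 E) {μ : ι → 𝕜} (hT : ∀ i, T (b i) = μ i • b i)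
    {c : ℝ} (hc : 0 ≤ c) (hμ : ∀ i, ‖μ i‖ ≤ c) (x : E) : ‖T x‖ ≤ c * ‖x‖ := by
  classical
  have hrepr : ∀ i, b.repr (T x) i = μ i * b.repr x i := by
    intro i
    conv_lhs => rw [← b.sum_repr x]
    simp [hT, smul_smul, Pi.single_apply, mul_comm]
  refine le_of_pow_le_pow_left₀ two_ne_zero (by positivity) ?_
  rw [← b.repr.norm_map, ← b.repr.norm_map x, mul_pow, EuclideanSpace.norm_sq_eq,
    EuclideanSpace.norm_sq_eq, Finset.mul_sum]
  refine Finset.sum_le_sum fun i _ => ?_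
  rw [hrepr, norm_mul, mul_pow]
  gcongr
  exact hμ i

end InnerProductSpace

section MulVecE

variable {M : ℕ}

theorem mulVecE_eq_toLpLinAlgEquiv (A : Matrix (Fin M) (Fin M) ℂ)
    (x : EuclideanSpace ℂ (Fin M)) :
    mulVecE A x = Matrix.toLpLinAlgEquiv 2 A x := rfl

theorem Matrix.PosSemidef.norm_mulVecE_le {A : Matrix (Fin M) (Fin M) ℂ} (hA : A.PosSemidef)
    {c : ℝ} (hc : IsGreatest (Set.range hA.1.eigenvalues) c) (x : EuclideanSpace ℂ (Fin M)) :
    ‖mulVecE A x‖ ≤ c * ‖x‖ := by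
  obtain ⟨⟨i, rfl⟩, hmax⟩ := hc
  refine hA.1.eigenvectorBasis.norm_apply_le_of_apply_eq_smul (T := Matrix.toEuclideanLin A)
    (μ := fun j => (hA.1.eigenvalues j : ℂ)) (fun j => ?_) (hA.eigenvalues_nonneg i)
    (fun j => ?_) x
  · rw [Matrix.toLpLin_apply, hA.1.mulVec_eigenvectorBasis]
    ext k
    simp
  · rw [Complex.norm_real, Real.norm_of_nonneg (hA.eigenvalues_nonneg j)]
    exact hmax ⟨j, rfl⟩

theorem smul_sub_eq_two_smul_mulVecE_of_eq_smul_inv {R : Matrix (Fin M) (Fin M) ℂ}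
    (hR : R.PosSemidef) {ρ : ℝ} (hρ : 0 < ρ) {y v : EuclideanSpace ℂ (Fin M)}
    (hv : v = (ρ : ℂ) • mulVecE (2 • R + (ρ : ℂ) • 1)⁻¹ y) :
    (ρ : ℂ) • (y - v) = (2 : ℂ) • mulVecE R v := by
  set A := 2 • R + (ρ : ℂ) • 1
  have hA : A.PosDef := by
    refine Matrix.PosDef.posSemidef_add ?_
      (Matrix.PosDef.one.smul (Complex.zero_lt_real.mpr hρ))
    rw [two_nsmul]
    exact hR.add hR
  have hAv : mulVecE A v = (ρ : ℂ) • y := by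
    rw [hv, mulVecE_eq_toLpLinAlgEquiv, mulVecE_eq_toLpLinAlgEquiv, map_smul,
      ← Module.End.mul_apply, ← map_mul,
      Matrix.mul_nonsing_inv _ ((Matrix.isUnit_iff_isUnit_det A).mp hA.isUnit), map_one,
      Module.End.one_apply]
  have hAR : mulVecE A v = (2 : ℂ) • mulVecE R v + (ρ : ℂ) • v := by
    simp only [A, mulVecE_eq_toLpLinAlgEquiv, map_add, map_nsmul, map_smul, map_one,
      LinearMap.add_apply, LinearMap.smul_apply, Module.End.one_apply, ofNat_smul_eq_nsmul]
  rw [smul_sub, ← hAv, hAR, add_sub_cancel_right]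

end MulVecE

theorem mul_sq_le_half_mul_sq_of_mul_le {ρ L a b : ℝ} (hρ : 0 < ρ) (hL : 0 ≤ L)
    (hρL : 2 * √2 * L ≤ ρ) (ha : 0 ≤ a) (hab : ρ * a ≤ 2 * L * b) :
    ρ * a ^ 2 ≤ ρ / 2 * b ^ 2 := by
  have h8 : 8 * L ^ 2 ≤ ρ ^ 2 := by
    have := pow_le_pow_left₀ (by positivity) hρL 2
    rw [mul_pow, mul_pow, Real.sq_sqrt zero_le_two] at this
    linarith
  have hsq : (ρ * a) ^ 2 ≤ (2 * L * b) ^ 2 := pow_le_pow_left₀ (by positivity) hab 2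
  nlinarith

section Lagrangian

variable {M : ℕ} {Rx : Matrix (Fin M) (Fin M) ℂ} {lam ρ : ℝ}
  {w w' v v' u u' : EuclideanSpace ℂ (Fin M)}

theorem lagr_w_update_le
    (hw' : lam * ∑ i, ‖w' i‖ + ρ / 2 * ‖w' - v + u‖ ^ 2 ≤
      lam * ∑ i, ‖w i‖ + ρ / 2 * ‖w - v + u‖ ^ 2) :
    lagr Rx lam ρ w' v u ≤ lagr Rx lam ρ w v u := by
  unfold lagr
  linarith

theorem lagr_v_update_add_le (hRx : Rx.PosSemidef)
    (hv' : (ρ : ℂ) • (w + u - v') = (2 : ℂ) • mulVecE Rx v') :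
    lagr Rx lam ρ w v' u + ρ / 2 * ‖v - v'‖ ^ 2 ≤ lagr Rx lam ρ w v u := by
  have hT : (Matrix.toLpLinAlgEquiv 2 Rx).IsPositive :=
    Matrix.isPositive_toEuclideanLin_iff.mpr hRx
  have := hT.re_inner_add_half_mul_norm_sub_sq_le hv' v
  simp only [lagr, sub_add_eq_add_sub, add_comm w u, ← mulVecE_eq_toLpLinAlgEquiv,
    RCLike.re_to_complex] at this ⊢
  linarith

theorem lagr_u_update_eq :
    lagr Rx lam ρ w v (u + w - v) = lagr Rx lam ρ w v u + ρ * ‖w - v‖ ^ 2 := by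
  have := parallelogram_law_with_norm ℂ (u + (w - v)) (w - v)
  rw [add_sub_cancel_right] at this
  simp only [lagr, add_sub_assoc, show w - v + u = u + (w - v) by abel,
    show w - v + (u + (w - v)) = u + (w - v) + (w - v) by abel]
  linear_combination ρ / 2 * this

theorem lagr_admm_step_le (hRx : Rx.PosSemidef) {lmax : ℝ}
    (hlmax : IsGreatest (Set.range hRx.1.eigenvalues) lmax) (hρ : 0 < ρ)
    (hρ_big : 2 * √2 * lmax ≤ ρ)
    (hw' : lam * ∑ i, ‖w' i‖ + ρ / 2 * ‖w' - v + u‖ ^ 2 ≤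
      lam * ∑ i, ‖w i‖ + ρ / 2 * ‖w - v + u‖ ^ 2)
    (hv' : (ρ : ℂ) • (w' + u - v') = (2 : ℂ) • mulVecE Rx v') (hu' : u' = u + w' - v')
    (hu_dual : (ρ : ℂ) • u = (2 : ℂ) • mulVecE Rx v) :
    lagr Rx lam ρ w' v' u' ≤ lagr Rx lam ρ w v u := by
  have hres : (ρ : ℂ) • (w' - v') = (2 : ℂ) • mulVecE Rx (v' - v) := by
    have hu'' : (ρ : ℂ) • u' = (2 : ℂ) • mulVecE Rx v' := by
      rw [hu', ← hv', add_comm w' u]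
    have hdiff : w' - v' = u' - u := by rw [hu']; abel
    rw [hdiff, smul_sub, hu'', hu_dual, ← smul_sub]
    exact congrArg _ (map_sub (Matrix.toLpLinAlgEquiv 2 Rx) v' v).symm
  have hres_norm : ρ * ‖w' - v'‖ ≤ 2 * lmax * ‖v - v'‖ := by
    calc ρ * ‖w' - v'‖ = ‖(ρ : ℂ) • (w' - v')‖ := by
          rw [norm_smul, Complex.norm_real, Real.norm_of_nonneg hρ.le]
      _ = 2 * ‖mulVecE Rx (v' - v)‖ := by rw [hres, norm_smul]; norm_num
      _ ≤ 2 * (lmax * ‖v - v'‖) := by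
          rw [norm_sub_rev v]
          gcongr
          exact hRx.norm_mulVecE_le hlmax _
      _ = 2 * lmax * ‖v - v'‖ := by ring
  have hlmax_nonneg : 0 ≤ lmax := by
    obtain ⟨⟨i, rfl⟩, -⟩ := hlmax
    exact hRx.eigenvalues_nonneg i
  calc lagr Rx lam ρ w' v' u' = lagr Rx lam ρ w' v' u + ρ * ‖w' - v'‖ ^ 2 := by
        rw [hu', lagr_u_update_eq]
    _ ≤ lagr Rx lam ρ w' v' u + ρ / 2 * ‖v - v'‖ ^ 2 := by
        have := mul_sq_le_half_mul_sq_of_mul_le hρ hlmax_nonneg hρ_big (norm_nonneg _) hres_norm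
        linarith
    _ ≤ lagr Rx lam ρ w' v u := lagr_v_update_add_le hRx hv'
    _ ≤ lagr Rx lam ρ w v u := lagr_w_update_le hw'

end Lagrangian

theorem admm_lagrangian_monotone_general
    {M : ℕ} (lam ρ : ℝ) (hρ : 0 < ρ)
    (Rx : Matrix (Fin M) (Fin M) ℂ) (hRx : Rx.PosSemidef)
    (a0 : EuclideanSpace ℂ (Fin M))
    (lmax : ℝ)
    (hlmax : IsGreatest (Set.range hRx.1.eigenvalues) lmax)
    (hρ_big : 2 * Real.sqrt 2 * lmax ≤ ρ)
    (w v u : ℕ → EuclideanSpace ℂ (Fin M))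
    (hw : ∀ k : ℕ, 1 ≤ ‖(inner ℂ a0 (w (k + 1)) : ℂ)‖ ^ 2 ∧
      ∀ x : EuclideanSpace ℂ (Fin M), 1 ≤ ‖(inner ℂ a0 x : ℂ)‖ ^ 2 →
        lam * ∑ i, ‖w (k + 1) i‖ + ρ / 2 * ‖w (k + 1) - v k + u k‖ ^ 2 ≤
        lam * ∑ i, ‖x i‖ + ρ / 2 * ‖x - v k + u k‖ ^ 2)
    (hv : ∀ k : ℕ, v (k + 1) = (ρ : ℂ) • mulVecE (2 • Rx + (ρ : ℂ) • 1)⁻¹ (w (k + 1) + u k))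
    (hu : ∀ k : ℕ, u (k + 1) = u k + w (k + 1) - v (k + 1)) :
    ∀ k : ℕ, 1 ≤ k →
      lagr Rx lam ρ (w (k + 1)) (v (k + 1)) (u (k + 1)) ≤
        lagr Rx lam ρ (w k) (v k) (u k) := by
  have hv_stationary (k : ℕ) : (ρ : ℂ) • (w (k + 1) + u k - v (k + 1)) =
      (2 : ℂ) • mulVecE Rx (v (k + 1)) :=
    smul_sub_eq_two_smul_mulVecE_of_eq_smul_inv hRx hρ (hv k)
  intro k hk
  obtain ⟨j, rfl⟩ : ∃ j, k = j + 1 := Nat.exists_eq_add_of_le' hk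
  have hu_dual : (ρ : ℂ) • u (j + 1) = (2 : ℂ) • mulVecE Rx (v (j + 1)) := by
    rw [hu j, ← hv_stationary j, add_comm (u j)]
  exact lagr_admm_step_le hRx hlmax hρ hρ_big ((hw (j + 1)).2 _ (hw j).1) (hv_stationary _)
    (hu _) hu_dual

/-- Lemma 1, monotonicity: If `ρ ≥ 2√2·λ_max(R_x)`, the augmented Lagrangian
value sequence generated by the ADMM iteration is monotonically non-increasing for `k ≥ 1`. -/
theorem admm_lagrangian_monotone
    {M : ℕ} (lam ρ : ℝ) (hlam : 0 < lam) (hρ : 0 < ρ)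
    (Rx : Matrix (Fin M) (Fin M) ℂ) (hRx : Rx.PosSemidef)
    (a0 : EuclideanSpace ℂ (Fin M)) (ha0 : a0 ≠ 0)
    (lmax : ℝ)
    (hlmax : IsGreatest (Set.range hRx.1.eigenvalues) lmax)
    (hρ_big : 2 * Real.sqrt 2 * lmax ≤ ρ)
    (w v u : ℕ → EuclideanSpace ℂ (Fin M))
    (hw : ∀ k : ℕ, 1 ≤ ‖(inner ℂ a0 (w (k + 1)) : ℂ)‖ ^ 2 ∧
      ∀ x : EuclideanSpace ℂ (Fin M), 1 ≤ ‖(inner ℂ a0 x : ℂ)‖ ^ 2 →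
        lam * ∑ i, ‖w (k + 1) i‖ + ρ / 2 * ‖w (k + 1) - v k + u k‖ ^ 2 ≤
        lam * ∑ i, ‖x i‖ + ρ / 2 * ‖x - v k + u k‖ ^ 2)
    (hv : ∀ k : ℕ, v (k + 1) = (ρ : ℂ) • mulVecE (2 • Rx + (ρ : ℂ) • 1)⁻¹ (w (k + 1) + u k))
    (hu : ∀ k : ℕ, u (k + 1) = u k + w (k + 1) - v (k + 1)) :
    ∀ k : ℕ, 1 ≤ k →
      lagr Rx lam ρ (w (k + 1)) (v (k + 1)) (u (k + 1)) ≤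
        lagr Rx lam ρ (w k) (v k) (u k) :=
  admm_lagrangian_monotone_general lam ρ hρ Rx hRx a0 lmax hlmax hρ_big w v u hw hv hu
end

section
/- (Theorem 1, part 2: vanishing of successive differences and primal residual) Consider the ADMM iteration for the sparse array beamforming problem, where R_x is Hermitian positive definite with λ_min(R_x) > 0, and suppose ρ ≥ max{ 2√2 · λ_max(R_x), 2λ_max²(R_x)/λ_min(R_x) }. Then, as k → ∞, ‖v_{k+1} − v_k‖₂ → 0, ‖u_{k+1} − u_k‖₂ → 0, ‖w_{k+1} − w_k‖₂ → 0, and ‖w_k − v_k‖₂ → 0. -/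
open scoped ComplexOrder

/-!
The Lyapunov function is the augmented Lagrangian evaluated along the iterates. The `w`-update
does not increase it; the `v`-update is the exact minimiser of a `(λ_min + ρ/2)`-strongly convex
quadratic, so it decreases `L` by at least `(λ_min + ρ/2)‖Δv‖²`; the dual update increases it by
exactly `ρ‖Δu‖²`. Optimality of the `v`-update gives `ρ u_{k+1} = 2 R_x v_{k+1}`, hence
`‖Δu‖ ≤ (2λ_max/ρ)‖Δv‖`, and the first bound on `ρ` makes the net decrease at least
`λ_min ‖Δv‖²`. The second bound on `ρ` makes `L` nonnegative along the iterates, so the decreases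
are summable and `Δv → 0`; then `Δu → 0`, and `w - v`, `Δw` follow from the dual update.
-/

open Filter Topology RCLike Matrix

lemma mulVecE_eq_toEuclideanLin {M : ℕ} (A : Matrix (Fin M) (Fin M) ℂ) :
    mulVecE A = toEuclideanLin A := rfl

lemma mulVecE_apply {M : ℕ} (A : Matrix (Fin M) (Fin M) ℂ) (x : EuclideanSpace ℂ (Fin M)) :
    mulVecE A x = WithLp.toLp 2 (A.mulVec x.ofLp) := rfl

namespace Matrix.IsHermitian

variable {𝕜 n : Type*} [RCLike 𝕜] [Fintype n] [DecidableEq n] {A : Matrix n n 𝕜}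

lemma eigenvectorBasis_repr_toEuclideanLin (hA : A.IsHermitian) (x : EuclideanSpace 𝕜 n)
    (i : n) :
    hA.eigenvectorBasis.repr (toEuclideanLin A x) i
      = hA.eigenvalues i * hA.eigenvectorBasis.repr x i := by
  have hb : toEuclideanLin A (hA.eigenvectorBasis i)
      = (hA.eigenvalues i : 𝕜) • hA.eigenvectorBasis i := by
    rw [← RCLike.real_smul_eq_coe_smul]
    exact congrArg (WithLp.toLp 2) (hA.mulVec_eigenvectorBasis i)
  rw [OrthonormalBasis.repr_apply_apply, OrthonormalBasis.repr_apply_apply,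
    ← isSymmetric_toEuclideanLin_iff.mpr hA, hb, inner_smul_left, conj_ofReal]

lemma norm_sq_eq_sum_eigenvectorBasis_repr (hA : A.IsHermitian) (x : EuclideanSpace 𝕜 n) :
    ‖x‖ ^ 2 = ∑ i, ‖hA.eigenvectorBasis.repr x i‖ ^ 2 := by
  rw [← hA.eigenvectorBasis.repr.norm_map, EuclideanSpace.norm_sq_eq]

lemma re_inner_toEuclideanLin_eq_sum (hA : A.IsHermitian) (x : EuclideanSpace 𝕜 n) :
    re (inner 𝕜 x (toEuclideanLin A x))
      = ∑ i, hA.eigenvalues i * ‖hA.eigenvectorBasis.repr x i‖ ^ 2 := by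
  rw [← hA.eigenvectorBasis.repr.inner_map_map, PiLp.inner_apply, map_sum]
  refine Finset.sum_congr rfl fun i _ => ?_
  rw [eigenvectorBasis_repr_toEuclideanLin, inner_apply, mul_assoc, mul_conj, ← ofReal_pow,
    ← ofReal_mul, ofReal_re]

lemma norm_toEuclideanLin_sq_eq_sum (hA : A.IsHermitian) (x : EuclideanSpace 𝕜 n) :
    ‖toEuclideanLin A x‖ ^ 2
      = ∑ i, hA.eigenvalues i ^ 2 * ‖hA.eigenvectorBasis.repr x i‖ ^ 2 := by
  rw [← hA.eigenvectorBasis.repr.norm_map, EuclideanSpace.norm_sq_eq]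
  simp_rw [eigenvectorBasis_repr_toEuclideanLin, norm_mul, mul_pow, norm_ofReal, sq_abs]

lemma mul_norm_sq_le_re_inner_toEuclideanLin (hA : A.IsHermitian) {m : ℝ}
    (hm : ∀ i, m ≤ hA.eigenvalues i) (x : EuclideanSpace 𝕜 n) :
    m * ‖x‖ ^ 2 ≤ re (inner 𝕜 x (toEuclideanLin A x)) := by
  rw [hA.re_inner_toEuclideanLin_eq_sum, hA.norm_sq_eq_sum_eigenvectorBasis_repr, Finset.mul_sum]
  gcongr with i
  exact hm i

lemma norm_toEuclideanLin_le (hA : A.IsHermitian) {c : ℝ} (hc : 0 ≤ c)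
    (h : ∀ i, |hA.eigenvalues i| ≤ c) (x : EuclideanSpace 𝕜 n) :
    ‖toEuclideanLin A x‖ ≤ c * ‖x‖ := by
  refine (pow_le_pow_iff_left₀ (norm_nonneg _) (by positivity) two_ne_zero).mp ?_
  rw [hA.norm_toEuclideanLin_sq_eq_sum, mul_pow, hA.norm_sq_eq_sum_eigenvectorBasis_repr,
    Finset.mul_sum]
  refine Finset.sum_le_sum fun i _ => mul_le_mul_of_nonneg_right ?_ (sq_nonneg _)
  rw [← sq_abs]
  exact pow_le_pow_left₀ (abs_nonneg _) (h i) 2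

end Matrix.IsHermitian

lemma tendsto_zero_of_add_mul_sq_le {F a : ℕ → ℝ} {c m : ℝ} (hc : 0 < c)
    (hF : ∀ k, F (k + 1) + c * a k ^ 2 ≤ F k) (hm : ∀ k, m ≤ F k) :
    Tendsto a atTop (𝓝 0) := by
  have hanti : Antitone F :=
    antitone_nat_of_succ_le fun k => by nlinarith [hF k, sq_nonneg (a k)]
  have hlim := tendsto_atTop_ciInf hanti ⟨m, Set.forall_mem_range.mpr hm⟩
  have hgap : Tendsto (fun k => (F k - F (k + 1)) / c) atTop (𝓝 0) := by
    simpa using (hlim.sub (hlim.comp (tendsto_add_atTop_nat 1))).div_const c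
  have hsq : Tendsto (fun k => a k ^ 2) atTop (𝓝 0) :=
    squeeze_zero (fun k => sq_nonneg (a k))
      (fun k => by rw [le_div_iff₀ hc]; linarith [hF k]) hgap
  rw [tendsto_zero_iff_abs_tendsto_zero]
  simpa [Function.comp_def, Real.sqrt_sq_eq_abs] using hsq.sqrt

lemma tendsto_successive_differences_of_dual_update {E : Type*} [SeminormedAddCommGroup E]
    {w v u : ℕ → E} {κ : ℝ} (hu : ∀ k, u (k + 1) = u k + w (k + 1) - v (k + 1))
    (hΔu : ∀ k, ‖u (k + 2) - u (k + 1)‖ ≤ κ * ‖v (k + 2) - v (k + 1)‖)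
    (hΔv : Tendsto (fun k => ‖v (k + 2) - v (k + 1)‖) atTop (𝓝 0)) :
    Tendsto (fun k => ‖v (k + 1) - v k‖) atTop (𝓝 0) ∧
      Tendsto (fun k => ‖u (k + 1) - u k‖) atTop (𝓝 0) ∧
      Tendsto (fun k => ‖w (k + 1) - w k‖) atTop (𝓝 0) ∧
      Tendsto (fun k => ‖w k - v k‖) atTop (𝓝 0) := by
  have hΔv₀ := (tendsto_add_atTop_iff_nat (f := fun k => ‖v (k + 1) - v k‖) 1).mp hΔv
  have hΔu₀ : Tendsto (fun k => ‖u (k + 1) - u k‖) atTop (𝓝 0) :=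
    (tendsto_add_atTop_iff_nat 1).mp <|
      squeeze_zero (fun _ => norm_nonneg _) hΔu (by simpa using hΔv.const_mul κ)
  have hr : ∀ k, w (k + 1) - v (k + 1) = u (k + 1) - u k := fun k => by rw [hu k]; abel
  have hres : Tendsto (fun k => ‖w k - v k‖) atTop (𝓝 0) :=
    (tendsto_add_atTop_iff_nat 1).mp (by simpa only [hr] using hΔu₀)
  refine ⟨hΔv₀, hΔu₀, squeeze_zero (fun _ => norm_nonneg _) (fun k => ?_)
    (by simpa using ((hres.comp (tendsto_add_atTop_nat 1)).add hres).add hΔv₀), hres⟩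
  calc ‖w (k + 1) - w k‖ = ‖(w (k + 1) - v (k + 1)) - (w k - v k) + (v (k + 1) - v k)‖ := by
        congr 1; abel
    _ ≤ ‖w (k + 1) - v (k + 1)‖ + ‖w k - v k‖ + ‖v (k + 1) - v k‖ :=
        (norm_add_le _ _).trans (add_le_add (norm_sub_le _ _) le_rfl)

lemma penalty_parameter_bounds {lmin lmax ρ : ℝ} (hlmin : 0 < lmin) (hlmax : 0 ≤ lmax)
    (hρ : 0 < ρ) (h : max (2 * √2 * lmax) (2 * lmax ^ 2 / lmin) ≤ ρ) :
    ρ * (2 * lmax / ρ) ^ 2 ≤ ρ / 2 ∧ ρ / 2 * (2 * lmax / ρ) ^ 2 ≤ lmin := by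
  obtain ⟨h₁, h₂⟩ := max_le_iff.mp h
  rw [div_le_iff₀ hlmin] at h₂
  have h₁' : 8 * lmax ^ 2 ≤ ρ ^ 2 := by
    have := pow_le_pow_left₀ (by positivity) h₁ 2
    rw [mul_pow, mul_pow, Real.sq_sqrt zero_le_two] at this
    linarith
  constructor
  · field_simp; nlinarith
  · field_simp; nlinarith

section ADMM

variable {M : ℕ} {Rx : Matrix (Fin M) (Fin M) ℂ} {lam ρ : ℝ}
  {w v u w' v' u' : EuclideanSpace ℂ (Fin M)}

lemma smul_sub_eq_two_smul_mulVecE (hRx : Rx.PosSemidef) (hρ : 0 < ρ)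
    {z : EuclideanSpace ℂ (Fin M)} (hv : v = (ρ : ℂ) • mulVecE (2 • Rx + (ρ : ℂ) • 1)⁻¹ z) :
    (ρ : ℂ) • (z - v) = (2 : ℂ) • mulVecE Rx v := by
  set S := 2 • Rx + (ρ : ℂ) • 1
  have h2Rx : (2 • Rx).PosSemidef := two_nsmul Rx ▸ hRx.add hRx
  have hS : S.PosDef :=
    Matrix.PosDef.posSemidef_add h2Rx (Matrix.PosDef.one.smul (by exact_mod_cast hρ))
  have hSv : mulVecE S v = (ρ : ℂ) • z := by
    rw [hv, mulVecE_apply, mulVecE_apply]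
    simp [Matrix.mulVec_smul, Matrix.mulVec_mulVec,
      Matrix.mul_nonsing_inv _ ((Matrix.isUnit_iff_isUnit_det _).mp hS.isUnit)]
  have hS' : mulVecE S v = (2 : ℂ) • mulVecE Rx v + (ρ : ℂ) • v := by
    simp only [S, mulVecE_apply, two_smul, Matrix.add_mulVec, Matrix.smul_mulVec,
      Matrix.one_mulVec, WithLp.toLp_add, WithLp.toLp_smul, WithLp.toLp_ofLp]
  rw [smul_sub, ← hSv, hS', add_sub_cancel_right]

lemma lagr_eq_add_of_stationary (hRx : Rx.IsHermitian)
    (hv' : (ρ : ℂ) • (w + u - v') = (2 : ℂ) • mulVecE Rx v') :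
    lagr Rx lam ρ w v u = lagr Rx lam ρ w v' u
      + (inner ℂ (v - v') (mulVecE Rx (v - v'))).re + ρ / 2 * ‖v - v'‖ ^ 2 := by
  set d := v - v'
  set a := w + u - v'
  have hsymm := (isSymmetric_toEuclideanLin_iff.mpr hRx) v' d
  have hquad : (inner ℂ v (mulVecE Rx v)).re = (inner ℂ v' (mulVecE Rx v')).re
      + ρ * (inner ℂ a d).re + (inner ℂ d (mulVecE Rx d)).re := by
    have hv : v = v' + d := by simp only [d]; abel
    have hlin : ρ * (inner ℂ a d).re = 2 * (inner ℂ (mulVecE Rx v') d).re := by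
      simpa [inner_smul_left, mul_comm] using congrArg (fun y => (inner ℂ y d).re) hv'
    have hre : (inner ℂ d (mulVecE Rx v')).re = (inner ℂ (mulVecE Rx v') d).re :=
      inner_re_symm (𝕜 := ℂ) _ _
    rw [hv, mulVecE_eq_toEuclideanLin, map_add, inner_add_left, inner_add_right, inner_add_right,
      ← hsymm, Complex.add_re, Complex.add_re, Complex.add_re]
    rw [mulVecE_eq_toEuclideanLin] at hlin hre
    linarith
  have hnorm : ‖w - v + u‖ ^ 2 = ‖a‖ ^ 2 - 2 * (inner ℂ a d).re + ‖d‖ ^ 2 := by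
    rw [show w - v + u = a - d by simp only [a, d]; abel]
    exact norm_sub_sq (𝕜 := ℂ) a d
  have ha : w - v' + u = a := by simp only [a]; abel
  unfold lagr
  rw [hquad, hnorm, ha]
  ring

lemma lagr_add_mul_norm_sq_le_of_stationary (hRx : Rx.IsHermitian) {lmin : ℝ}
    (hq : ∀ x, lmin * ‖x‖ ^ 2 ≤ (inner ℂ x (mulVecE Rx x)).re)
    (hv' : (ρ : ℂ) • (w + u - v') = (2 : ℂ) • mulVecE Rx v') :
    lagr Rx lam ρ w v' u + (lmin + ρ / 2) * ‖v' - v‖ ^ 2 ≤ lagr Rx lam ρ w v u := by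
  rw [lagr_eq_add_of_stationary (v := v) hRx hv', norm_sub_rev v' v]
  linarith [hq (v - v')]

lemma lagr_eq_add_of_dual_update (hu' : u' = u + w - v) :
    lagr Rx lam ρ w v u' = lagr Rx lam ρ w v u + ρ * ‖u' - u‖ ^ 2 := by
  have h := parallelogram_law_with_norm ℂ (w - v + u) (u' - u)
  have h₁ : w - v + u + (u' - u) = w - v + u' := by abel
  have h₂ : w - v + u - (u' - u) = u := by rw [hu']; abel
  have h₃ : w - v + u = u' := by rw [hu']; abel
  rw [h₁, h₂, h₃] at h
  unfold lagr
  rw [h₃]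
  linear_combination (ρ / 2) * h

lemma lagr_admm_step_add_le (hRx : Rx.IsHermitian) (hρ : 0 ≤ ρ) {lmin κ : ℝ}
    (hq : ∀ x, lmin * ‖x‖ ^ 2 ≤ (inner ℂ x (mulVecE Rx x)).re)
    (hw' : lam * ∑ i, ‖w' i‖ + ρ / 2 * ‖w' - v + u‖ ^ 2
      ≤ lam * ∑ i, ‖w i‖ + ρ / 2 * ‖w - v + u‖ ^ 2)
    (hv' : (ρ : ℂ) • (w' + u - v') = (2 : ℂ) • mulVecE Rx v') (hu' : u' = u + w' - v')
    (hΔu : ‖u' - u‖ ≤ κ * ‖v' - v‖) :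
    lagr Rx lam ρ w' v' u' + (lmin + ρ / 2 - ρ * κ ^ 2) * ‖v' - v‖ ^ 2
      ≤ lagr Rx lam ρ w v u := by
  have hw : lagr Rx lam ρ w' v u ≤ lagr Rx lam ρ w v u := by unfold lagr; linarith
  have hv := lagr_add_mul_norm_sq_le_of_stationary (lam := lam) (v := v) hRx hq hv'
  have hu := lagr_eq_add_of_dual_update (Rx := Rx) (lam := lam) (ρ := ρ) hu'
  have hΔu' : ρ * ‖u' - u‖ ^ 2 ≤ ρ * κ ^ 2 * ‖v' - v‖ ^ 2 := by
    rw [mul_assoc, ← mul_pow]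
    gcongr
  linarith

lemma lagr_nonneg_of_norm_le (hlam : 0 ≤ lam) (hρ : 0 ≤ ρ) {lmin κ : ℝ}
    (hq : ∀ x, lmin * ‖x‖ ^ 2 ≤ (inner ℂ x (mulVecE Rx x)).re)
    (hu : ‖u‖ ≤ κ * ‖v‖) (hκ : ρ / 2 * κ ^ 2 ≤ lmin) :
    0 ≤ lagr Rx lam ρ w v u := by
  have hu' : ρ / 2 * ‖u‖ ^ 2 ≤ lmin * ‖v‖ ^ 2 :=
    calc ρ / 2 * ‖u‖ ^ 2 ≤ ρ / 2 * (κ * ‖v‖) ^ 2 := by gcongr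
      _ = ρ / 2 * κ ^ 2 * ‖v‖ ^ 2 := by ring
      _ ≤ lmin * ‖v‖ ^ 2 := by gcongr
  have : 0 ≤ lam * ∑ i, ‖w i‖ + ρ / 2 * ‖w - v + u‖ ^ 2 := by positivity
  unfold lagr
  linarith [hq v]

lemma norm_le_of_smul_eq_two_smul_mulVecE (hρ : 0 < ρ) {lmax : ℝ}
    (hRx : ∀ x, ‖mulVecE Rx x‖ ≤ lmax * ‖x‖) (h : (ρ : ℂ) • u = (2 : ℂ) • mulVecE Rx v) :
    ‖u‖ ≤ 2 * lmax / ρ * ‖v‖ := by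
  have hn := congrArg norm h
  rw [norm_smul, norm_smul, Complex.norm_real, Real.norm_of_nonneg hρ.le, Complex.norm_two] at hn
  rw [div_mul_eq_mul_div, le_div_iff₀ hρ]
  nlinarith [hRx v]

end ADMM

theorem admm_successive_differences_vanish_general
    {M : ℕ} (lam ρ : ℝ) (hlam : 0 < lam) (hρ : 0 < ρ)
    (Rx : Matrix (Fin M) (Fin M) ℂ) (hRx : Rx.PosDef)
    (a0 : EuclideanSpace ℂ (Fin M))
    (lmax lmin : ℝ)
    (hlmax : IsGreatest (Set.range hRx.posSemidef.1.eigenvalues) lmax)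
    (hlmin : IsLeast (Set.range hRx.posSemidef.1.eigenvalues) lmin)
    (hlmin_pos : 0 < lmin)
    (hρ_big : max (2 * Real.sqrt 2 * lmax) (2 * lmax ^ 2 / lmin) ≤ ρ)
    (w v u : ℕ → EuclideanSpace ℂ (Fin M))
    (hw : ∀ k : ℕ, 1 ≤ ‖(inner ℂ a0 (w (k + 1)) : ℂ)‖ ^ 2 ∧
      ∀ x : EuclideanSpace ℂ (Fin M), 1 ≤ ‖(inner ℂ a0 x : ℂ)‖ ^ 2 →
        lam * ∑ i, ‖w (k + 1) i‖ + ρ / 2 * ‖w (k + 1) - v k + u k‖ ^ 2 ≤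
        lam * ∑ i, ‖x i‖ + ρ / 2 * ‖x - v k + u k‖ ^ 2)
    (hv : ∀ k : ℕ, v (k + 1) = (ρ : ℂ) • mulVecE (2 • Rx + (ρ : ℂ) • 1)⁻¹ (w (k + 1) + u k))
    (hu : ∀ k : ℕ, u (k + 1) = u k + w (k + 1) - v (k + 1)) :
    Filter.Tendsto (fun k : ℕ => ‖v (k + 1) - v k‖) Filter.atTop (nhds 0) ∧
    Filter.Tendsto (fun k : ℕ => ‖u (k + 1) - u k‖) Filter.atTop (nhds 0) ∧
    Filter.Tendsto (fun k : ℕ => ‖w (k + 1) - w k‖) Filter.atTop (nhds 0) ∧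
    Filter.Tendsto (fun k : ℕ => ‖w k - v k‖) Filter.atTop (nhds 0) := by
  have hH : Rx.IsHermitian := hRx.posSemidef.1
  have hq : ∀ x, lmin * ‖x‖ ^ 2 ≤ (inner ℂ x (mulVecE Rx x)).re :=
    hH.mul_norm_sq_le_re_inner_toEuclideanLin fun i => hlmin.2 ⟨i, rfl⟩
  have hlmax₀ : 0 ≤ lmax := (hlmin_pos.trans_le (hlmin.2 hlmax.1)).le
  have hnorm : ∀ x, ‖mulVecE Rx x‖ ≤ lmax * ‖x‖ := hH.norm_toEuclideanLin_le hlmax₀ fun i =>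
    abs_le.mpr ⟨by linarith [hlmin.2 ⟨i, rfl⟩], hlmax.2 ⟨i, rfl⟩⟩
  obtain ⟨hκ₁, hκ₂⟩ := penalty_parameter_bounds hlmin_pos hlmax₀ hρ hρ_big
  have hstat : ∀ k, (ρ : ℂ) • (w (k + 1) + u k - v (k + 1)) = (2 : ℂ) • mulVecE Rx (v (k + 1)) :=
    fun k => smul_sub_eq_two_smul_mulVecE hRx.posSemidef hρ (hv k)
  have hdual : ∀ k, (ρ : ℂ) • u (k + 1) = (2 : ℂ) • mulVecE Rx (v (k + 1)) := fun k => by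
    rw [hu k, add_comm (u k)]; exact hstat k
  have hΔu : ∀ k, ‖u (k + 2) - u (k + 1)‖ ≤ 2 * lmax / ρ * ‖v (k + 2) - v (k + 1)‖ := fun k =>
    norm_le_of_smul_eq_two_smul_mulVecE hρ hnorm (by
      rw [smul_sub, hdual, hdual, mulVecE_eq_toEuclideanLin, map_sub, smul_sub])
  refine tendsto_successive_differences_of_dual_update hu hΔu ?_
  exact tendsto_zero_of_add_mul_sq_le
    (F := fun k => lagr Rx lam ρ (w (k + 1)) (v (k + 1)) (u (k + 1)))
    (by linarith : 0 < lmin + ρ / 2 - ρ * (2 * lmax / ρ) ^ 2)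
    (fun k => lagr_admm_step_add_le hH hρ.le hq ((hw (k + 1)).2 _ (hw k).1) (hstat (k + 1))
      (hu (k + 1)) (hΔu k))
    (fun k => lagr_nonneg_of_norm_le hlam.le hρ.le hq
      (norm_le_of_smul_eq_two_smul_mulVecE hρ hnorm (hdual k)) hκ₂)

/-- Theorem 1, part 2: Under `R_x ≻ 0` and
`ρ ≥ max{2√2·λ_max(R_x), 2λ_max²(R_x)/λ_min(R_x)}`, the successive differences of the ADMM
iterates and the primal residual vanish: `‖v_{k+1} − v_k‖ → 0`, `‖u_{k+1} − u_k‖ → 0`,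
`‖w_{k+1} − w_k‖ → 0`, and `‖w_k − v_k‖ → 0`. -/
theorem admm_successive_differences_vanish
    {M : ℕ} (lam ρ : ℝ) (hlam : 0 < lam) (hρ : 0 < ρ)
    (Rx : Matrix (Fin M) (Fin M) ℂ) (hRx : Rx.PosDef)
    (a0 : EuclideanSpace ℂ (Fin M)) (ha0 : a0 ≠ 0)
    (lmax lmin : ℝ)
    (hlmax : IsGreatest (Set.range hRx.posSemidef.1.eigenvalues) lmax)
    (hlmin : IsLeast (Set.range hRx.posSemidef.1.eigenvalues) lmin)
    (hlmin_pos : 0 < lmin)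
    (hρ_big : max (2 * Real.sqrt 2 * lmax) (2 * lmax ^ 2 / lmin) ≤ ρ)
    (w v u : ℕ → EuclideanSpace ℂ (Fin M))
    (hw : ∀ k : ℕ, 1 ≤ ‖(inner ℂ a0 (w (k + 1)) : ℂ)‖ ^ 2 ∧
      ∀ x : EuclideanSpace ℂ (Fin M), 1 ≤ ‖(inner ℂ a0 x : ℂ)‖ ^ 2 →
        lam * ∑ i, ‖w (k + 1) i‖ + ρ / 2 * ‖w (k + 1) - v k + u k‖ ^ 2 ≤
        lam * ∑ i, ‖x i‖ + ρ / 2 * ‖x - v k + u k‖ ^ 2)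
    (hv : ∀ k : ℕ, v (k + 1) = (ρ : ℂ) • mulVecE (2 • Rx + (ρ : ℂ) • 1)⁻¹ (w (k + 1) + u k))
    (hu : ∀ k : ℕ, u (k + 1) = u k + w (k + 1) - v (k + 1)) :
    Filter.Tendsto (fun k : ℕ => ‖v (k + 1) - v k‖) Filter.atTop (nhds 0) ∧
    Filter.Tendsto (fun k : ℕ => ‖u (k + 1) - u k‖) Filter.atTop (nhds 0) ∧
    Filter.Tendsto (fun k : ℕ => ‖w (k + 1) - w k‖) Filter.atTop (nhds 0) ∧
    Filter.Tendsto (fun k : ℕ => ‖w k - v k‖) Filter.atTop (nhds 0) :=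
  admm_successive_differences_vanish_general lam ρ hlam hρ Rx hRx a0 lmax lmin hlmax hlmin hlmin_pos
    hρ_big w v u hw hv hu
end
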